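/- arXiv:2507.11828 — 2 statements merged into one kernel-verified Lean document; each statement's English description precedes it below -/
import Mathlib

section
/- Let q be an odd prime and k ≥ 1 a natural number. Let S = {s_1, …, s_ℓ} be a finite set of nonzero integers, none of which is a perfect q-th power, and let a_1, …, a_ℓ ∈ {1, …, q−1}. Then S belongs to 𝒯_{k,q} if and only if the set {s_1^{a_1}, …, s_ℓ^{a_ℓ}} belongs to 𝒯_{k,q}. -/
open Finset

/-- `S ∈ 𝒯_{k,q}`: there is a positive integer `Δ` such that for every natural number `N`
with `Ω(N) ≤ k` and `gcd(N, Δ) = 1`, some `s ∈ S` is a `q`-th power modulo `N`. -/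
def MemT (q k : ℕ) (S : Set ℤ) : Prop :=
  ∃ Δ : ℕ, 0 < Δ ∧ ∀ N : ℕ, 0 < N → N.primeFactorsList.length ≤ k → Nat.Coprime N Δ →
    ∃ s ∈ S, ∃ x : ℤ, (N : ℤ) ∣ x ^ q - s

/-- `s` is a perfect `q`-th power of an integer. -/
def IsPerfectPow (q : ℕ) (s : ℤ) : Prop := ∃ r : ℤ, r ^ q = s

/-- The finite set of primes dividing `∏_{s ∈ S} rad_q(|s|)`, i.e. the primes `p` such that
`q ∤ v_p(|s|)` for some `s ∈ S`. -/
def qPrimes (q : ℕ) (S : Finset ℤ) : Finset ℕ :=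
  S.sup fun s => s.natAbs.primeFactors.filter fun p => ¬ q ∣ s.natAbs.factorization p

/-- The vector `(v_{p_1}(|u|) mod q, …, v_{p_n}(|u|) mod q)` where `p_1 < … < p_n`
is the increasing enumeration of the finite set of primes `P`. -/
def vecOf (q : ℕ) (P : Finset ℕ) (u : ℤ) : Fin P.card → ZMod q :=
  fun i => ((u.natAbs.factorization (P.orderIsoOfFin rfl i).1 : ℕ) : ZMod q)

/-- The projective point `⟨v⟩` of `PG(F_q^n)` spanned by a vector `v`. -/
def projPoint {q n : ℕ} (v : Fin n → ZMod q) : Submodule (ZMod q) (Fin n → ZMod q) :=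
  Submodule.span (ZMod q) {v}

/-- The set of projective points associated with `S` in `PG(F_q^n)`,
`n` being the number of distinct primes dividing `∏_{s ∈ S} rad_q(|s|)`. -/
def assocPoints (q : ℕ) (S : Finset ℤ) :
    Set (Submodule (ZMod q) (Fin (qPrimes q S).card → ZMod q)) :=
  {P | ∃ s ∈ S, P = projPoint (vecOf q (qPrimes q S) s)}

/-- `B` is a `k`-blocking set of `PG(F_q^n)`: every subspace of codimension `k`
contains a nonzero vector spanning a point of `B`. -/
def IsBlockingSet (q n k : ℕ) (B : Set (Submodule (ZMod q) (Fin n → ZMod q))) : Prop :=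
  ∀ W : Submodule (ZMod q) (Fin n → ZMod q), Module.finrank (ZMod q) W = n - k →
    ∃ v ∈ W, v ≠ 0 ∧ projPoint v ∈ B

/-- `B` is (the point set of) a `k`-space of `PG(F_q^n)`. -/
def IsKSpace (q n k : ℕ) (B : Set (Submodule (ZMod q) (Fin n → ZMod q))) : Prop :=
  ∃ W : Submodule (ZMod q) (Fin n → ZMod q), Module.finrank (ZMod q) W = k + 1 ∧
    B = {P | ∃ v ∈ W, v ≠ 0 ∧ P = projPoint v}

/-- `S` and `T` are geometrically `q`-equivalent: some element of `PGL(n, q)` maps the point set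
associated with `S` onto the point set associated with `T`, where the points are computed with
respect to all the primes dividing `(∏_{s ∈ S} rad_q(|s|)) ⬝ (∏_{t ∈ T} rad_q(|t|))`. -/
def GeomEquiv (q : ℕ) (S T : Finset ℤ) : Prop :=
  ∃ Ψ : (Fin (qPrimes q (S ∪ T)).card → ZMod q) ≃ₗ[ZMod q]
        (Fin (qPrimes q (S ∪ T)).card → ZMod q),
    (Submodule.map Ψ.toLinearMap) ''
        {P | ∃ s ∈ S, P = projPoint (vecOf q (qPrimes q (S ∪ T)) s)} =
      {P | ∃ t ∈ T, P = projPoint (vecOf q (qPrimes q (S ∪ T)) t)}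

/-- The set of squares of `F_qˣ` together with `0`. -/
def Q0 (q : ℕ) : Set (ZMod q) := {x | (∃ a : ZMod q, a ≠ 0 ∧ a ^ 2 = x) ∨ x = 0}

/-!
If `x ^ q ≡ s ^ a (mod N)` with `s` a unit mod `N` and `a u + q v = 1`, then
`s ≡ (x ^ u s ^ v) ^ q (mod N)`. So `s ^ a` is a `q`-th power modulo `N` exactly when `s` is,
as soon as `N` is prime to `s`; adjoining `∏ |s|` to `Δ` guarantees this.
-/

theorem exists_pow_eq_of_pow_eq_pow_of_coprime {G : Type*} [CommGroup G] {g x : G} {n q : ℕ}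
    (hnq : n.Coprime q) (h : x ^ q = g ^ n) : ∃ y, y ^ q = g := by
  refine ⟨x ^ n.gcdA q * g ^ n.gcdB q, ?_⟩
  calc (x ^ n.gcdA q * g ^ n.gcdB q) ^ q
      = (x ^ q) ^ n.gcdA q * (g ^ q) ^ n.gcdB q := by
        rw [← zpow_natCast, mul_zpow, zpow_comm x, zpow_comm g, zpow_natCast, zpow_natCast]
    _ = g ^ ((n * n.gcdA q + q * n.gcdB q : ℤ)) := by
        rw [h, zpow_add, zpow_mul, zpow_mul, zpow_natCast, zpow_natCast]
    _ = g := by rw [← Nat.gcd_eq_gcd_ab, hnq, Nat.cast_one, zpow_one]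

theorem IsUnit.exists_pow_eq_of_pow_eq_pow {M : Type*} [CommMonoid M] {g x : M} {n q : ℕ}
    (hg : IsUnit g) (hnq : n.Coprime q) (h : x ^ q = g ^ n) : ∃ y, y ^ q = g := by
  rcases eq_or_ne q 0 with rfl | hq
  · rw [(Nat.coprime_zero_right n).mp hnq, pow_zero, pow_one] at h
    exact ⟨1, by rw [pow_zero, h]⟩
  have hx : IsUnit x := (isUnit_pow_iff hq).mp (h ▸ hg.pow n)
  lift g to Mˣ using hg
  lift x to Mˣ using hx
  obtain ⟨y, rfl⟩ := exists_pow_eq_of_pow_eq_pow_of_coprime hnq (Units.val_injective h)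
  exact ⟨y, by simp⟩

theorem Int.dvd_pow_sub_iff (N q : ℕ) (x s : ℤ) :
    (N : ℤ) ∣ x ^ q - s ↔ (x : ZMod N) ^ q = s := by
  rw [← Int.cast_pow, eq_comm, ZMod.intCast_eq_intCast_iff_dvd_sub]

theorem Int.exists_dvd_pow_sub_of_dvd_pow_sub_pow {N q n : ℕ} {x s : ℤ} (hs : IsCoprime s N)
    (hnq : n.Coprime q) (h : (N : ℤ) ∣ x ^ q - s ^ n) : ∃ y : ℤ, (N : ℤ) ∣ y ^ q - s := by
  rw [Int.dvd_pow_sub_iff, Int.cast_pow] at h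
  obtain ⟨z, hz⟩ := (ZMod.unitOfIsCoprime s hs).isUnit.exists_pow_eq_of_pow_eq_pow hnq h
  exact ⟨z.cast, by rw [Int.dvd_pow_sub_iff, ZMod.intCast_zmod_cast, hz, ZMod.coe_unitOfIsCoprime]⟩

theorem MemT.image_pow {q k : ℕ} {S : Set ℤ} (a : ℤ → ℕ) (hS : MemT q k S) :
    MemT q k ((fun s => s ^ a s) '' S) := by
  obtain ⟨Δ, hΔ, hT⟩ := hS
  refine ⟨Δ, hΔ, fun N hN hΩ hNΔ => ?_⟩
  obtain ⟨s, hs, x, hx⟩ := hT N hN hΩ hNΔ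
  refine ⟨s ^ a s, Set.mem_image_of_mem _ hs, x ^ a s, hx.trans ?_⟩
  rw [← pow_mul, mul_comm, pow_mul]
  exact sub_dvd_pow_sub_pow _ _ _

theorem MemT.of_image_pow {q k : ℕ} {S : Finset ℤ} {a : ℤ → ℕ} (hS0 : ∀ s ∈ S, s ≠ 0)
    (ha : ∀ s ∈ S, (a s).Coprime q) (h : MemT q k ↑(S.image fun s => s ^ a s)) :
    MemT q k ↑S := by
  obtain ⟨Δ, hΔ, hT⟩ := h
  -- Enlarging `Δ` by `∏ |s|` makes every `s ∈ S` a unit modulo the admissible `N`.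
  refine ⟨Δ * ∏ s ∈ S, s.natAbs,
    Nat.mul_pos hΔ (Finset.prod_pos fun s hs => Int.natAbs_pos.mpr (hS0 s hs)),
    fun N hN hΩ hNΔ => ?_⟩
  obtain ⟨_, ht, x, hx⟩ := hT N hN hΩ (hNΔ.coprime_dvd_right (dvd_mul_right _ _))
  obtain ⟨s, hs, rfl⟩ := Finset.mem_image.mp ht
  have hsN : IsCoprime s N := Int.isCoprime_iff_nat_coprime.mpr <|
    ((hNΔ.coprime_dvd_right (dvd_mul_left _ _)).coprime_dvd_right
      (Finset.dvd_prod_of_mem _ hs)).symm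
  exact ⟨s, hs, Int.exists_dvd_pow_sub_of_dvd_pow_sub_pow hsN (ha s hs) hx⟩

theorem stmt3_general (q k : ℕ) (hq : q.Prime)
    (S : Finset ℤ) (hS0 : ∀ s ∈ S, s ≠ 0)
    (a : ℤ → ℕ) (ha : ∀ s ∈ S, 1 ≤ a s ∧ a s ≤ q - 1) :
    MemT q k ↑S ↔ MemT q k ↑(S.image fun s => s ^ a s) := by
  have hcop : ∀ s ∈ S, (a s).Coprime q := fun s hs =>
    (Nat.coprime_of_lt_prime (by grind) (by grind [hq.two_le]) hq).symm
  refine ⟨fun h => ?_, MemT.of_image_pow hS0 hcop⟩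
  rw [Finset.coe_image]
  exact h.image_pow a

/-- **Corollary (invariance under exponentiation).** For `a_s ∈ {1, …, q-1}`,
`S ∈ 𝒯_{k,q}` iff `{s^{a_s} : s ∈ S} ∈ 𝒯_{k,q}`. -/
theorem stmt3 (q k : ℕ) (hq : q.Prime) (hodd : Odd q) (hk : 1 ≤ k)
    (S : Finset ℤ) (hS0 : ∀ s ∈ S, s ≠ 0) (hSpow : ∀ s ∈ S, ¬ IsPerfectPow q s)
    (a : ℤ → ℕ) (ha : ∀ s ∈ S, 1 ≤ a s ∧ a s ≤ q - 1) :
    MemT q k ↑S ↔ MemT q k ↑(S.image fun s => s ^ a s) :=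
  stmt3_general q k hq S hS0 a ha
end

section
/- Let q be an odd prime and let Q_0 = {a² : a ∈ F_qˣ} ∪ {0} ⊆ F_q. Then the point set B = {⟨(0, 1, −s)⟩, ⟨(−s, 0, 1)⟩, ⟨(1, −s, 0)⟩ : s ∈ Q_0} ⊆ PG(F_q^3) is a 1-blocking set of PG(F_q^3) (i.e., every 2-dimensional F_q-linear subspace of F_q^3 contains a nonzero vector spanning a point of B) and |B| = 3(q + 1)/2. -/
open Finset

/-- The projective triangle: the point set
`{⟨(0,1,-s)⟩, ⟨(-s,0,1)⟩, ⟨(1,-s,0)⟩ : s ∈ Q_0} ⊆ PG(F_q^3)`. -/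
def triangleSet (q : ℕ) : Set (Submodule (ZMod q) (Fin 3 → ZMod q)) :=
  {P | ∃ s ∈ Q0 q,
    P = projPoint ![0, 1, -s] ∨ P = projPoint ![-s, 0, 1] ∨ P = projPoint ![1, -s, 0]}


section TriangleAux

variable {q : ℕ}

lemma mem_Q0_iff (x : ZMod q) : x ∈ Q0 q ↔ ∃ a : ZMod q, a ^ 2 = x := by
  constructor
  · rintro (⟨a, -, h⟩ | rfl)
    exacts [⟨a, h⟩, ⟨0, by simp⟩]
  · rintro ⟨a, rfl⟩
    rcases eq_or_ne a 0 with rfl | ha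
    · right; simp
    · left; exact ⟨a, ha, rfl⟩

lemma Q0_ncard (hq : q.Prime) (hodd : Odd q) : (Q0 q).ncard = (q + 1) / 2 := by
  haveI : Fact q.Prime := ⟨hq⟩
  classical
  have hq2 : (2 : ZMod q) ≠ 0 := by
    have h2 : ¬ (q ∣ 2) := by
      intro h
      have := (Nat.prime_dvd_prime_iff_eq hq Nat.prime_two).mp h
      rw [this, Nat.odd_iff] at hodd
      omega
    intro h
    exact h2 (by exact_mod_cast (ZMod.natCast_eq_zero_iff 2 q).mp (by exact_mod_cast h))
  set T : Finset (ZMod q) := Finset.univ.image (fun a : ZMod q => a ^ 2) with hT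
  have hQT : Q0 q = ↑T := by
    ext x
    simp only [hT, Finset.coe_image, Finset.coe_univ, Set.image_univ, Set.mem_range,
      mem_Q0_iff]
  have h0T : (0 : ZMod q) ∈ T := by
    simp only [hT, Finset.mem_image]
    exact ⟨0, Finset.mem_univ _, by simp⟩
  have hfib : ∀ y ∈ T, (Finset.univ.filter fun x : ZMod q => x ^ 2 = y).card
      = if y = 0 then 1 else 2 := by
    intro y hy
    rcases eq_or_ne y 0 with rfl | hy0
    · rw [if_pos rfl]
      have : (Finset.univ.filter fun x : ZMod q => x ^ 2 = 0) = {0} := by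
        ext x; simp [pow_eq_zero_iff]
      rw [this, Finset.card_singleton]
    · rw [if_neg hy0]
      obtain ⟨a, -, ha⟩ := Finset.mem_image.mp hy
      have ha0 : a ≠ 0 := by rintro rfl; exact hy0 (by simpa using ha.symm)
      have : (Finset.univ.filter fun x : ZMod q => x ^ 2 = y) = {a, -a} := by
        ext x
        simp only [Finset.mem_filter, Finset.mem_univ, true_and, Finset.mem_insert,
          Finset.mem_singleton, ← ha, sq_eq_sq_iff_eq_or_eq_neg]
      rw [this, Finset.card_insert_of_notMem, Finset.card_singleton]
      simp only [Finset.mem_singleton]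
      intro h
      apply ha0
      have h2 : (2 : ZMod q) * a = 0 := by
        rw [two_mul]; nth_rewrite 2 [h]; exact add_neg_cancel a
      rcases mul_eq_zero.mp h2 with h | h
      · exact absurd h hq2
      · exact h
  have hcount : q = ∑ y ∈ T, (Finset.univ.filter fun x : ZMod q => x ^ 2 = y).card := by
    have := Finset.card_eq_sum_card_fiberwise
      (f := fun a : ZMod q => a ^ 2) (s := Finset.univ) (t := T)
      (fun x _ => Finset.mem_image_of_mem _ (Finset.mem_univ x))
    rw [← this, Finset.card_univ, ZMod.card]
  have hsum : ∑ y ∈ T, (Finset.univ.filter fun x : ZMod q => x ^ 2 = y).card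
      = 1 + 2 * (T.erase 0).card := by
    rw [Finset.sum_congr rfl hfib, ← Finset.sum_erase_add T _ h0T, if_pos rfl]
    have h2 : ∀ y ∈ T.erase 0, (if y = (0:ZMod q) then 1 else 2) = 2 := fun y hy =>
      if_neg (Finset.ne_of_mem_erase hy)
    rw [Finset.sum_congr rfl h2, Finset.sum_const, smul_eq_mul]
    ring
  have hTcard : T.card = (T.erase 0).card + 1 := by
    rw [Finset.card_erase_of_mem h0T]
    have : 1 ≤ T.card := Finset.card_pos.mpr ⟨0, h0T⟩
    omega
  have hqodd : q % 2 = 1 := Nat.odd_iff.mp hodd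
  rw [hQT, Set.ncard_coe_finset]
  omega

lemma proj_eq_iff {v w : Fin 3 → ZMod q} [Fact q.Prime] :
    projPoint v = projPoint w ↔ ∃ z : (ZMod q)ˣ, z • v = w := by
  unfold projPoint
  exact Submodule.span_singleton_eq_span_singleton

end TriangleAux


lemma vec_ne_zero1 [Fact q.Prime] (s : ZMod q) : ![0, 1, -s] ≠ 0 := by
  intro h; have := congrFun h 1; simp at this

lemma vec_ne_zero2 [Fact q.Prime] (s : ZMod q) : ![-s, 0, 1] ≠ 0 := by
  intro h; have := congrFun h 2; simp at this

lemma vec_ne_zero3 [Fact q.Prime] (s : ZMod q) : ![1, -s, 0] ≠ 0 := by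
  intro h; have := congrFun h 0; simp at this

lemma sq_mem_Q0 {s : ZMod q} (hs0 : s ≠ 0) (hs : IsSquare s) : s ∈ Q0 q := by
  obtain ⟨r, hr⟩ := hs
  refine Or.inl ⟨r, ?_, by rw [sq]; exact hr.symm⟩
  rintro rfl; exact hs0 (by simp [hr])

lemma triangle_blocking (hq : q.Prime) (hodd : Odd q) :
    IsBlockingSet q 3 1 (triangleSet q) := by
  haveI : Fact q.Prime := ⟨hq⟩
  classical
  intro W hW
  have hW2 : Module.finrank (ZMod q) W = 2 := by simpa using hW
  have hfr : Module.finrank (ZMod q) (Fin 3 → ZMod q) = 3 := by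
    simp [Module.finrank_pi]
  have hWtop : W < ⊤ := by
    rcases lt_or_eq_of_le (le_top : W ≤ ⊤) with h | h
    · exact h
    · exfalso
      rw [h, finrank_top, hfr] at hW2
      omega
  obtain ⟨f, hf0, hmap⟩ := Submodule.exists_dual_map_eq_bot_of_lt_top hWtop inferInstance
  have hle : W ≤ LinearMap.ker f := by
    intro x hx
    have hx' : f x ∈ W.map f := Submodule.mem_map_of_mem hx
    rw [hmap] at hx'
    exact LinearMap.mem_ker.mpr ((Submodule.mem_bot (ZMod q)).mp hx')
  have hWker : W = LinearMap.ker f := by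
    have hkertop : LinearMap.ker f < ⊤ := by
      rcases lt_or_eq_of_le (le_top : LinearMap.ker f ≤ ⊤) with h | h
      · exact h
      · exfalso
        apply hf0
        refine LinearMap.ext fun x => ?_
        have : x ∈ LinearMap.ker f := h.ge trivial
        simpa using this
    have h1 : Module.finrank (ZMod q) (LinearMap.ker f) < 3 := by
      have := Submodule.finrank_lt (K := ZMod q) (V := Fin 3 → ZMod q) hkertop.ne
      omega
    exact Submodule.eq_of_le_of_finrank_le hle (by omega)
  set a := f (Pi.single 0 1) with ha
  set b := f (Pi.single 1 1) with hb
  set c := f (Pi.single 2 1) with hc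
  have hrep : ∀ v : Fin 3 → ZMod q,
      v = v 0 • (Pi.single 0 1 : Fin 3 → ZMod q) + v 1 • (Pi.single 1 1 : Fin 3 → ZMod q)
        + v 2 • (Pi.single 2 1 : Fin 3 → ZMod q) := by
    intro v; funext i; fin_cases i <;> simp [Pi.single_apply]
  have hfv : ∀ v : Fin 3 → ZMod q, f v = v 0 * a + v 1 * b + v 2 * c := by
    intro v
    conv_lhs => rw [hrep v]
    simp [smul_eq_mul]
    rfl
  -- find suitable s and vector
  have key : ∃ s ∈ Q0 q, ∃ v : Fin 3 → ZMod q, v ≠ 0 ∧ f v = 0 ∧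
      (v = ![0, 1, -s] ∨ v = ![-s, 0, 1] ∨ v = ![1, -s, 0]) := by
    have hQ00 : (0 : ZMod q) ∈ Q0 q := Or.inr rfl
    rcases eq_or_ne c 0 with hc0 | hc0
    · refine ⟨0, hQ00, ![-0, 0, 1], by simpa using vec_ne_zero2 (0 : ZMod q), ?_, Or.inr (Or.inl rfl)⟩
      rw [hfv]
      simp [hc0]
    rcases eq_or_ne a 0 with ha0 | ha0
    · refine ⟨0, hQ00, ![1, -0, 0], by simpa using vec_ne_zero3 (0 : ZMod q), ?_, Or.inr (Or.inr rfl)⟩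
      rw [hfv]
      simp [ha0]
    rcases eq_or_ne b 0 with hb0 | hb0
    · refine ⟨0, hQ00, ![0, 1, -0], by simpa using vec_ne_zero1 (0 : ZMod q), ?_, Or.inl rfl⟩
      rw [hfv]
      simp [hb0]
    -- all of a, b, c nonzero
    have hs1 : b * c⁻¹ ≠ 0 := mul_ne_zero hb0 (inv_ne_zero hc0)
    have hs2 : c * a⁻¹ ≠ 0 := mul_ne_zero hc0 (inv_ne_zero ha0)
    have hs3 : a * b⁻¹ ≠ 0 := mul_ne_zero ha0 (inv_ne_zero hb0)
    have hprod : quadraticChar (ZMod q) (b * c⁻¹) * quadraticChar (ZMod q) (c * a⁻¹) *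
        quadraticChar (ZMod q) (a * b⁻¹) = 1 := by
      rw [← map_mul, ← map_mul]
      have h1 : (b * c⁻¹) * (c * a⁻¹) * (a * b⁻¹) = 1 := by field_simp
      rw [h1, map_one]
    have hsome : IsSquare (b * c⁻¹) ∨ IsSquare (c * a⁻¹) ∨ IsSquare (a * b⁻¹) := by
      by_contra hcon
      push_neg at hcon
      obtain ⟨h1, h2, h3⟩ := hcon
      rw [quadraticChar_neg_one_iff_not_isSquare.mpr h1,
        quadraticChar_neg_one_iff_not_isSquare.mpr h2,
        quadraticChar_neg_one_iff_not_isSquare.mpr h3] at hprod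
      norm_num at hprod
    rcases hsome with h | h | h
    · refine ⟨b * c⁻¹, sq_mem_Q0 hs1 h, ![0, 1, -(b * c⁻¹)], vec_ne_zero1 _, ?_, Or.inl rfl⟩
      rw [hfv]
      show (0 : ZMod q) * a + 1 * b + -(b * c⁻¹) * c = 0
      field_simp
      ring
    · refine ⟨c * a⁻¹, sq_mem_Q0 hs2 h, ![-(c * a⁻¹), 0, 1], vec_ne_zero2 _, ?_, Or.inr (Or.inl rfl)⟩
      rw [hfv]
      show -(c * a⁻¹) * a + (0 : ZMod q) * b + 1 * c = 0
      field_simp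
      ring
    · refine ⟨a * b⁻¹, sq_mem_Q0 hs3 h, ![1, -(a * b⁻¹), 0], vec_ne_zero3 _, ?_, Or.inr (Or.inr rfl)⟩
      rw [hfv]
      show (1 : ZMod q) * a + -(a * b⁻¹) * b + 0 * c = 0
      field_simp
      ring
  obtain ⟨s, hs, v, hv0, hfv0, hv⟩ := key
  refine ⟨v, ?_, hv0, ?_⟩
  · rw [hWker]
    exact hfv0
  · refine ⟨s, hs, ?_⟩
    rcases hv with rfl | rfl | rfl
    · exact Or.inl rfl
    · exact Or.inr (Or.inl rfl)
    · exact Or.inr (Or.inr rfl)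


lemma f1_inj [Fact q.Prime] {s t : ZMod q}
    (h : projPoint ![0, 1, -s] = projPoint ![0, 1, -t]) : s = t := by
  obtain ⟨z, hz⟩ := proj_eq_iff.mp h
  have h1 := congrFun hz 1
  have h2 := congrFun hz 2
  simp [Units.smul_def] at h1 h2
  rw [h1] at h2; simpa using h2

lemma f2_inj [Fact q.Prime] {s t : ZMod q}
    (h : projPoint ![-s, 0, 1] = projPoint ![-t, 0, 1]) : s = t := by
  obtain ⟨z, hz⟩ := proj_eq_iff.mp h
  have h1 := congrFun hz 2
  have h2 := congrFun hz 0
  simp [Units.smul_def] at h1 h2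
  rw [h1] at h2; simpa using h2

lemma f3_inj [Fact q.Prime] {s t : ZMod q}
    (h : projPoint ![1, -s, 0] = projPoint ![1, -t, 0]) : s = t := by
  obtain ⟨z, hz⟩ := proj_eq_iff.mp h
  have h1 := congrFun hz 0
  have h2 := congrFun hz 1
  simp [Units.smul_def] at h1 h2
  rw [h1] at h2; simpa using h2

lemma f12_ne [Fact q.Prime] {s t : ZMod q} :
    projPoint ![0, 1, -s] ≠ projPoint ![-t, 0, 1] := by
  intro h
  obtain ⟨z, hz⟩ := proj_eq_iff.mp h
  have h1 := congrFun hz 1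
  simp [Units.smul_def] at h1

lemma f13_ne [Fact q.Prime] {s t : ZMod q} :
    projPoint ![0, 1, -s] ≠ projPoint ![1, -t, 0] := by
  intro h
  obtain ⟨z, hz⟩ := proj_eq_iff.mp h
  have h1 := congrFun hz 0
  simp [Units.smul_def] at h1

lemma f23_ne [Fact q.Prime] {s t : ZMod q} :
    projPoint ![-s, 0, 1] ≠ projPoint ![1, -t, 0] := by
  intro h
  obtain ⟨z, hz⟩ := proj_eq_iff.mp h
  have h1 := congrFun hz 2
  simp [Units.smul_def] at h1

lemma triangle_ncard (hq : q.Prime) (hodd : Odd q) :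
    (triangleSet q).ncard = 3 * ((q + 1) / 2) := by
  haveI : Fact q.Prime := ⟨hq⟩
  classical
  set f1 : ZMod q → Submodule (ZMod q) (Fin 3 → ZMod q) :=
    fun s => projPoint ![0, 1, -s] with hf1
  set f2 : ZMod q → Submodule (ZMod q) (Fin 3 → ZMod q) :=
    fun s => projPoint ![-s, 0, 1] with hf2
  set f3 : ZMod q → Submodule (ZMod q) (Fin 3 → ZMod q) :=
    fun s => projPoint ![1, -s, 0] with hf3
  have hsplit : triangleSet q = f1 '' Q0 q ∪ (f2 '' Q0 q ∪ f3 '' Q0 q) := by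
    ext P
    simp only [triangleSet, Set.mem_setOf_eq, Set.mem_union, Set.mem_image, hf1, hf2, hf3]
    constructor
    · rintro ⟨s, hs, h | h | h⟩
      exacts [Or.inl ⟨s, hs, h.symm⟩, Or.inr (Or.inl ⟨s, hs, h.symm⟩),
        Or.inr (Or.inr ⟨s, hs, h.symm⟩)]
    · rintro (⟨s, hs, h⟩ | ⟨s, hs, h⟩ | ⟨s, hs, h⟩)
      exacts [⟨s, hs, Or.inl h.symm⟩, ⟨s, hs, Or.inr (Or.inl h.symm)⟩,
        ⟨s, hs, Or.inr (Or.inr h.symm)⟩]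
  have hQfin : (Q0 q).Finite := Set.toFinite _
  have hd23 : Disjoint (f2 '' Q0 q) (f3 '' Q0 q) := by
    rw [Set.disjoint_left]
    rintro P ⟨s, -, rfl⟩ ⟨t, -, hP⟩
    exact f23_ne hP.symm
  have hd1 : Disjoint (f1 '' Q0 q) (f2 '' Q0 q ∪ f3 '' Q0 q) := by
    rw [Set.disjoint_left]
    rintro P ⟨s, -, rfl⟩ (⟨t, -, hP⟩ | ⟨t, -, hP⟩)
    · exact f12_ne hP.symm
    · exact f13_ne hP.symm
  rw [hsplit, Set.ncard_union_eq hd1 (hQfin.image _) ((hQfin.image _).union (hQfin.image _)),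
    Set.ncard_union_eq hd23 (hQfin.image _) (hQfin.image _),
    Set.ncard_image_of_injOn (fun s _ t _ h => f1_inj h),
    Set.ncard_image_of_injOn (fun s _ t _ h => f2_inj h),
    Set.ncard_image_of_injOn (fun s _ t _ h => f3_inj h),
    Q0_ncard hq hodd]
  ring

/-- **Proposition (projective triangle).** For an odd prime `q`, the projective triangle is a
`1`-blocking set of `PG(F_q^3)` of size `3(q+1)/2`. -/
theorem stmt15 (q : ℕ) (hq : q.Prime) (hodd : Odd q) :
    IsBlockingSet q 3 1 (triangleSet q) ∧ (triangleSet q).ncard = 3 * ((q + 1) / 2) := by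
  exact ⟨triangle_blocking hq hodd, triangle_ncard hq hodd⟩
end
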